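/- arXiv:2501.17738 — 7 statements merged into one kernel-verified Lean document; each statement's English description precedes it below -/
import Mathlib

section
/- Let M be a matroid on a nonempty finite ground set E having no loops and no coloops, and let b be a basis of M. Then the collection B(M) \ {b} is the collection of bases of a matroid on E if and only if for every p ∈ E \ b and every q ∈ b, the set (b \ {q}) ∪ {p} is a basis of M. -/
open Matroid

variable {α : Type*}

/-!
Suppose the bases of `N` are those of `M` other than `b`. For `q ∈ b` not a coloop, `b \ {q}`
lies in a base of `M` avoiding `q`, so it is `N`-independent; for a nonloop `p ∉ b`, a base of
`M` inside `insert p b` containing `p` is an `N`-base. Augmenting `b \ {q}` from it in `N` adds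
`p` or `q`, and adding `q` would make `b` an `N`-base.

Conversely, an exchange between two bases other than `b` can only land on `b` when the first
base is itself `insert x (b \ {y})`; then exchanging `y` for an element of the second base
outside `b` gives a base that is not `b`.
-/

namespace Matroid

open Set

variable {M N : Matroid α} {b : Set α} {p q : α}

theorem isBase_insert_sdiff_of_isBase_iff_ne (hN : ∀ B, N.IsBase B ↔ M.IsBase B ∧ B ≠ b)
    (hb : M.IsBase b) (hbfin : b.Finite) (hp : M.IsNonloop p) (hpb : p ∉ b) (hq : q ∈ b)
    (hq' : ¬ M.IsColoop q) : M.IsBase (insert p (b \ {q})) := by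
  have hNbase {B : Set α} (hB : M.IsBase B) (hBb : B ≠ b) : N.IsBase B := (hN B).2 ⟨hB, hBb⟩
  obtain ⟨B₁, hB₁, hqB₁⟩ : ∃ B, M.IsBase B ∧ q ∉ B := by
    simpa [isColoop_iff_forall_mem_isBase] using hq'
  obtain ⟨B₂, hB₂, hbB₂, hB₂sub⟩ :=
    (hb.indep.subset (sdiff_subset : b \ {q} ⊆ b)).exists_isBase_subset_union_isBase hB₁
  have hqB₂ : q ∉ B₂ := fun h ↦ (hB₂sub h).elim (fun h ↦ h.2 rfl) hqB₁
  have hI : N.Indep (b \ {q}) :=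
    (hNbase hB₂ (by rintro rfl; exact hqB₂ hq)).indep.subset hbB₂
  obtain ⟨B₃, hB₃, hpB₃, hB₃sub⟩ := hp.indep.exists_isBase_subset_union_isBase hb
  have hB₃N : N.IsBase B₃ := hNbase hB₃ (by rintro rfl; exact hpb (hpB₃ rfl))
  have hcard : (b \ {q}).encard < B₃.encard := by
    rw [hB₃.encard_eq_encard_of_isBase hb]
    exact hbfin.sdiff.encard_lt_encard (sdiff_singleton_ssubset.2 hq)
  obtain ⟨e, ⟨heB₃, he⟩, heI⟩ := hI.augment hB₃N.indep hcard
  have heN : N.IsBase (insert e (b \ {q})) := by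
    refine heI.isBase_of_eRk_ge (hbfin.sdiff.insert e) ?_
    rw [heI.eRk_eq_encard, ← hB₃N.encard_eq_eRank, hB₃.encard_eq_encard_of_isBase hb,
      encard_insert_of_notMem he, encard_sdiff_singleton_add_one hq]
  obtain ⟨heM, heb⟩ := (hN _).1 heN
  obtain rfl : e = p := by
    rcases hB₃sub heB₃ with rfl | heb'
    · rfl
    · obtain rfl : e = q := by_contra fun h ↦ he ⟨heb', h⟩
      exact absurd (insert_sdiff_self_of_mem hq) heb
  exact heM

theorem exists_isBase_ne_of_isNonloop_of_not_isColoop {e : α} (he : M.IsNonloop e)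
    (he' : ¬ M.IsColoop e) : ∃ B, M.IsBase B ∧ B ≠ b := by
  obtain ⟨B₁, hB₁, heB₁⟩ := he.exists_mem_isBase
  obtain ⟨B₂, hB₂, heB₂⟩ : ∃ B, M.IsBase B ∧ e ∉ B := by
    simpa [isColoop_iff_forall_mem_isBase] using he'
  by_cases h : B₁ = b
  · exact ⟨B₂, hB₂, by rintro rfl; exact heB₂ (h ▸ heB₁)⟩
  · exact ⟨B₁, hB₁, h⟩

theorem exchangeProperty_isBase_and_ne (hb : M.IsBase b)
    (hexch : ∀ p ∈ M.E \ b, ∀ q ∈ b, M.IsBase (insert p (b \ {q}))) :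
    ExchangeProperty (fun B ↦ M.IsBase B ∧ B ≠ b) := by
  rintro B₁ B₂ ⟨hB₁, -⟩ ⟨hB₂, hB₂b⟩ x hx
  obtain ⟨y, hy, hBy⟩ := hB₁.exchange hB₂ hx
  by_cases hyb : insert y (B₁ \ {x}) = b
  · have hb' : b \ {y} = B₁ \ {x} := by
      rw [← hyb, insert_sdiff_self_of_notMem (fun h ↦ hy.2 h.1)]
    obtain ⟨z, hzB₂, hzb⟩ : ∃ z ∈ B₂, z ∉ b := by
      by_contra! h
      exact hB₂b (hB₂.eq_of_subset_isBase hb h)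
    have hzB₁ : z ∉ B₁ := fun h ↦ hzb (hb' ▸ ⟨h, by rintro rfl; exact hx.2 hzB₂⟩ : z ∈ b \ {y}).1
    refine ⟨z, ⟨hzB₂, hzB₁⟩, ?_, fun h ↦ hzb (h ▸ mem_insert z _)⟩
    simpa [hb'] using hexch z ⟨hB₂.subset_ground hzB₂, hzb⟩ y (hyb ▸ mem_insert y _)
  · exact ⟨y, hy, hBy, hyb⟩

end Matroid

/-- Let `M` be a matroid on a nonempty finite ground set without loops (every
element lies in some basis) and without coloops (every element is outside some
basis), and let `b` be a basis of `M`. Then the bases of `M` other than `b` form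
the collection of bases of a matroid on the same ground set iff every set of the
form `(b \ {q}) ∪ {p}` with `p ∈ E \ b` and `q ∈ b` is a basis of `M`. -/
theorem stmt2 (M : Matroid α) (hE : M.E.Finite) (hEne : M.E.Nonempty)
    (hloop : ∀ e ∈ M.E, ∃ B, M.IsBase B ∧ e ∈ B)
    (hcoloop : ∀ e ∈ M.E, ∃ B, M.IsBase B ∧ e ∉ B)
    (b : Set α) (hb : M.IsBase b) :
    (∃ N : Matroid α, N.E = M.E ∧ ∀ B : Set α, N.IsBase B ↔ M.IsBase B ∧ B ≠ b) ↔
      (∀ p ∈ M.E \ b, ∀ q ∈ b, M.IsBase (insert p (b \ {q}))) := by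
  have hnonloop {e : α} (he : e ∈ M.E) : M.IsNonloop e :=
    let ⟨_, hB, heB⟩ := hloop e he
    hB.indep.isNonloop_of_mem heB
  have hnotColoop {e : α} (he : e ∈ M.E) : ¬ M.IsColoop e := fun h ↦
    let ⟨_, hB, heB⟩ := hcoloop e he
    heB (h.mem_of_isBase hB)
  constructor
  · rintro ⟨N, -, hN⟩ p hp q hq
    exact isBase_insert_sdiff_of_isBase_iff_ne hN hb (hE.subset hb.subset_ground)
      (hnonloop hp.1) hp.2 hq (hnotColoop (hb.subset_ground hq))
  · intro hexch
    obtain ⟨e, he⟩ := hEne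
    refine ⟨Matroid.ofIsBaseOfFinite hE (fun B ↦ M.IsBase B ∧ B ≠ b)
      (exists_isBase_ne_of_isNonloop_of_not_isColoop (hnonloop he) (hnotColoop he))
      (exchangeProperty_isBase_and_ne hb hexch) (fun B hB ↦ hB.1.subset_ground), rfl,
      fun B ↦ Iff.rfl⟩
end

section
/- Let M be a matroid on a finite ground set E and let b be a basis of M such that the collection B(M) \ {b} is the collection of bases of a matroid M_b on E. Suppose B₁, B₂, B₁', B₂'' are bases of M_b and B₂' is a basis of M such that the multiset {b, B₂'} is obtained from {B₁, B₂} by a single symmetric exchange step in M, and {B₁', B₂''} is obtained from {b, B₂'} by a single symmetric exchange step in M. Then the multiset {B₁', B₂''} can be obtained from {B₁, B₂} by a finite sequence of symmetric exchange steps in M_b. -/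
open Matroid

variable {α : Type*}

/-- `T` is obtained from `S` by a single symmetric exchange step in the matroid `M`:
`S = S₀ + {B₁, B₂}` and `T = S₀ + {B₁', B₂'}` where `S₀` is a multiset of bases,
`B₁, B₂` are bases, and `B₁' = (B₁ \ {e}) ∪ {f}`, `B₂' = (B₂ \ {f}) ∪ {e}` are bases
for some `e ∈ B₁ \ B₂` and `f ∈ B₂ \ B₁`. -/
def SymExchStep [DecidableEq α] (M : Matroid α) (S T : Multiset (Finset α)) : Prop :=
  ∃ (S₀ : Multiset (Finset α)) (B₁ B₂ : Finset α) (e f : α),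
    (∀ B ∈ S₀, M.IsBase (B : Set α)) ∧
    M.IsBase (B₁ : Set α) ∧ M.IsBase (B₂ : Set α) ∧
    e ∈ B₁ \ B₂ ∧ f ∈ B₂ \ B₁ ∧
    M.IsBase ((insert f (B₁.erase e) : Finset α) : Set α) ∧
    M.IsBase ((insert e (B₂.erase f) : Finset α) : Set α) ∧
    S = B₁ ::ₘ B₂ ::ₘ S₀ ∧
    T = insert f (B₁.erase e) ::ₘ insert e (B₂.erase f) ::ₘ S₀

/-- `M` satisfies the strong White condition: any two multisets of bases of `M`
with equal element multiset sums are connected by a finite sequence of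
symmetric exchange steps. -/
def StrongWhite [DecidableEq α] (M : Matroid α) : Prop :=
  ∀ S T : Multiset (Finset α),
    (∀ B ∈ S, M.IsBase (B : Set α)) → (∀ B ∈ T, M.IsBase (B : Set α)) →
    (S.map Finset.val).sum = (T.map Finset.val).sum →
    Relation.ReflTransGen (SymExchStep M) S T

/-!
Put `B := B₂'`. Reversing the first step, both steps start from `{b, B}`, so
`{B₁, B₂} = {b - f + e, B - e + f}` and `{B₁', B₂''} = {b - g + k, B - k + g}` with
`f, g ∈ b \ B` and `e, k ∈ B \ b`. Call `(w, x) ∈ (b \ B) × (B \ b)` a cell when `B - x + w` is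
a basis. Because the bases other than `b` still form a matroid, every `b - w + x` is a basis of
`M`, so the multisets `{b - w + x, B - x + w}` of two distinct cells in a common row or column
differ by one symmetric exchange in `Mb`. It remains to join the cells `(f, e)` and `(g, k)` by
row and column moves. Otherwise the component of `(f, e)` has a row set `R` and a column set `C`
such that a cell lies in a row of `R` iff it lies in a column of `C`. Then every element of `b`
outside `R` lies in the closure of `B \ C`, so the basis `b - f + k` is spanned by
`(B \ C) ∪ (R - f)`, forcing `|C| < |R|`; the complementary rows and columns and the basis
`b - g + e` force `|R| < |C|` in the same way.
-/

namespace Matroid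

open Set

theorem IsBase.mem_closure_sdiff_of_forall_not_isBase {M : Matroid α} {B C : Set α} {w : α}
    (hB : M.IsBase B) (hwE : w ∈ M.E) (hwB : w ∉ B)
    (hC : ∀ x ∈ C, ¬ M.IsBase (insert w (B \ {x}))) :
    w ∈ M.closure (B \ C) := by
  have hwcl : w ∈ M.closure B := by rwa [hB.closure_eq]
  refine M.closure_subset_closure ?_ ((hB.fundCircuit_isCircuit hwE hwB)
    |>.mem_closure_sdiff_singleton_of_mem (M.mem_fundCircuit w B))
  rintro x ⟨hxK, hxw : x ≠ w⟩
  have hxB : x ∈ B := by simpa [hxw] using M.fundCircuit_subset_insert w B hxK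
  refine ⟨hxB, fun hxC ↦ hC x hxC (hB.exchange_isBase_of_indep hwB ?_)⟩
  rw [Set.insert_sdiff_singleton_comm hxw.symm]
  exact (hB.indep.mem_fundCircuit_iff hwcl hwB).1 hxK

theorem IsBase.encard_le_of_subset_closure {M : Matroid α} {B X : Set α} (hB : M.IsBase B)
    (hBX : B ⊆ M.closure X) : B.encard ≤ X.encard :=
  calc B.encard = M.eRk B := hB.indep.eRk_eq_encard.symm
    _ ≤ M.eRk (M.closure X) := M.eRk_mono hBX
    _ = M.eRk X := M.eRk_closure_eq X
    _ ≤ X.encard := M.eRk_le_encard X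

theorem IsBase.finsetCard_eq {M : Matroid α} {B B' : Finset α} (hB : M.IsBase (B : Set α))
    (hB' : M.IsBase (B' : Set α)) : B.card = B'.card := by
  simpa using hB.ncard_eq_ncard_of_isBase hB'

def IsBaseRemoval (Mb M : Matroid α) (b : Set α) : Prop :=
  Mb.E = M.E ∧ ∀ B, Mb.IsBase B ↔ M.IsBase B ∧ B ≠ b

namespace IsBaseRemoval

variable {M Mb : Matroid α} {b B I : Set α}

theorem isBase_of_ne (h : Mb.IsBaseRemoval M b) (hB : M.IsBase B) (hBb : B ≠ b) : Mb.IsBase B :=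
  (h.2 B).2 ⟨hB, hBb⟩

theorem indep_of_indep (h : Mb.IsBaseRemoval M b) (hI : Mb.Indep I) : M.Indep I := by
  obtain ⟨B, hB, hIB⟩ := hI.exists_isBase_superset
  exact ((h.2 B).1 hB).1.indep.subset hIB

theorem not_indep (h : Mb.IsBaseRemoval M b) (hb : M.IsBase b) : ¬ Mb.Indep b := by
  intro hbi
  obtain ⟨B, hB, hbB⟩ := hbi.exists_isBase_superset
  obtain ⟨hBM, hBb⟩ := (h.2 B).1 hB
  exact hBb (hb.eq_of_subset_isBase hBM hbB).symm

/-- `b` is dependent in `Mb` but `b \ {w}` is not, so `Mb.closure (b \ {w})` contains `b`; if it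
contained `x` too, it would contain a basis of `Mb` inside `insert x b`, and `b \ {w}` would be a
basis of `Mb`, hence of `M`. -/
theorem isBase_insert_sdiff (h : Mb.IsBaseRemoval M b) (hb : M.IsBase b) (hB : M.IsBase B)
    {w x : α} (hw : w ∈ b \ B) (hx : x ∈ B \ b) : M.IsBase (insert x (b \ {w})) := by
  have hbE : b ⊆ Mb.E := h.1 ▸ hb.subset_ground
  have hbw : Mb.Indep (b \ {w}) := by
    obtain ⟨B', hB', hbB', hB'sub⟩ :=
      (hb.indep.subset sdiff_subset).exists_isBase_subset_union_isBase hB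
    refine (h.isBase_of_ne hB' ?_).indep.subset hbB'
    rintro rfl
    obtain hw' | hw' := hB'sub hw.1
    · exact hw'.2 rfl
    · exact hw.2 hw'
  have hbcl : b ⊆ Mb.closure (b \ {w}) := by
    have hwcl : w ∈ Mb.closure (b \ {w}) := by
      rw [hbw.mem_closure_iff_of_notMem (by simp), insert_sdiff_singleton,
        insert_eq_of_mem hw.1, Dep]
      exact ⟨h.not_indep hb, hbE⟩
    intro y hy
    obtain rfl | hyw := eq_or_ne y w
    · exact hwcl
    · exact Mb.mem_closure_of_mem' ⟨hy, hyw⟩ (hbE hy)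
  have hxcl : x ∉ Mb.closure (b \ {w}) := by
    intro hxcl
    obtain ⟨B'', hB'', hxB'', hB''sub⟩ :=
      (hB.indep.subset (singleton_subset_iff.2 hx.1)).exists_isBase_subset_union_isBase hb
    have hB''Mb : Mb.IsBase B'' := h.isBase_of_ne hB'' (fun hB''b ↦ hx.2 (hB''b ▸ hxB'' rfl))
    have hspan : Mb.Spanning (b \ {w}) := by
      rw [spanning_iff_ground_subset_closure (sdiff_subset.trans hbE), ← hB''Mb.closure_eq]
      refine Mb.closure_subset_closure_of_subset_closure (hB''sub.trans ?_)
      exact union_subset (singleton_subset_iff.2 hxcl) hbcl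
    have hbwb := (h.2 _).1 (hspan.isBase_of_indep hbw) |>.1.eq_of_subset_isBase hb sdiff_subset
    exact (hbwb.symm ▸ hw.1 : w ∈ b \ {w}).2 rfl
  refine hb.exchange_isBase_of_indep hx.2 (h.indep_of_indep ?_)
  rw [hbw.insert_indep_iff_of_notMem (fun hx' ↦ hx.2 hx'.1)]
  exact ⟨h.1 ▸ hB.subset_ground hx.1, hxcl⟩

end IsBaseRemoval

section Finset

variable [DecidableEq α]

theorem IsBase.card_lt_card_of_forall_not_isBase {M : Matroid α} {b B R C : Finset α}
    {w₀ x₀ : α} (hB : M.IsBase (B : Set α)) (hC : C ⊆ B \ b)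
    (hRC : ∀ w ∈ b \ B, w ∉ R → ∀ x ∈ C, ¬ M.IsBase ↑(insert w (B.erase x)))
    (hw₀ : w₀ ∈ R) (hx₀ : x₀ ∈ B \ C) (hbase : M.IsBase ↑(insert x₀ (b.erase w₀))) :
    C.card < R.card := by
  set Z := (B \ C) ∪ R.erase w₀
  have hsub : (↑(insert x₀ (b.erase w₀)) : Set α) ⊆ M.closure ↑Z := by
    intro y hy
    have hyE := hbase.subset_ground hy
    simp only [Finset.coe_insert, Finset.coe_erase, mem_insert_iff, mem_sdiff, Finset.mem_coe,
      mem_singleton_iff] at hy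
    obtain rfl | ⟨hyb, hyw⟩ := hy
    · exact M.mem_closure_of_mem' (by simp [Z, Finset.mem_sdiff.1 hx₀]) hyE
    by_cases hyR : y ∈ R
    · exact M.mem_closure_of_mem' (by simp [Z, hyR, hyw]) hyE
    by_cases hyB : y ∈ B
    · have hyC : y ∉ C := fun hyC ↦ (Finset.mem_sdiff.1 (hC hyC)).2 hyb
      exact M.mem_closure_of_mem' (by simp [Z, hyB, hyC]) hyE
    refine M.closure_subset_closure ?_ (hB.mem_closure_sdiff_of_forall_not_isBase (C := ↑C) hyE
      (by simpa using hyB) fun x hx ↦ ?_)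
    · simp [Z, ← Finset.coe_sdiff]
    · simpa using hRC y (by simp [hyb, hyB]) hyR x hx
  have hBZ : B.card ≤ Z.card := by
    have := hbase.encard_le_of_subset_closure hsub
    rw [Set.encard_coe_eq_coe_finsetCard, Set.encard_coe_eq_coe_finsetCard,
      hbase.finsetCard_eq hB] at this
    exact_mod_cast this
  have hZ : Z.card ≤ (B \ C).card + (R.erase w₀).card := Finset.card_union_le _ _
  have hBC := Finset.card_sdiff_add_card_eq_card (hC.trans Finset.sdiff_subset)
  have hR := Finset.card_erase_add_one hw₀
  omega

end Finset

end Matroid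

def GridAdj {β : Type*} (P : α → β → Prop) (p q : α × β) : Prop :=
  P p.1 p.2 ∧ P q.1 q.2 ∧ (p.1 = q.1 ∨ p.2 = q.2)

theorem GridAdj.exists_cut_of_not_reflTransGen {β : Type*} {P : α → β → Prop} {p q : α × β}
    (hp : P p.1 p.2) (hq : P q.1 q.2) (hpq : ¬ Relation.ReflTransGen (GridAdj P) p q) :
    ∃ (R : Set α) (C : Set β), p.1 ∈ R ∧ p.2 ∈ C ∧ q.1 ∉ R ∧ q.2 ∉ C ∧
      ∀ w x, P w x → (w ∈ R ↔ x ∈ C) := by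
  set Reach := Relation.ReflTransGen (GridAdj P) p
  have reach_adj : ∀ {r : α × β} {w x}, Reach r → P w x → (r.1 = w ∨ r.2 = x) → Reach (w, x) := by
    intro r w x hr hwx hline
    have hr' : P r.1 r.2 := by
      obtain rfl | ⟨_, -, _, hr', -⟩ := hr.cases_tail
      exacts [hp, hr']
    exact hr.tail ⟨hr', hwx, hline⟩
  refine ⟨{w | ∃ x, Reach (w, x)}, {x | ∃ w, Reach (w, x)}, ⟨p.2, .refl⟩, ⟨p.1, .refl⟩,
    fun ⟨x, hx⟩ ↦ hpq (reach_adj hx hq (.inl rfl)), fun ⟨w, hw⟩ ↦ hpq (reach_adj hw hq (.inr rfl)),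
    fun w x hwx ↦ ⟨fun ⟨x', h⟩ ↦ ⟨w, reach_adj h hwx (.inl rfl)⟩,
      fun ⟨w', h⟩ ↦ ⟨x, reach_adj h hwx (.inr rfl)⟩⟩⟩

theorem Multiset.cons_cons_eq_pair {a b c d : α} {s : Multiset α}
    (h : c ::ₘ d ::ₘ s = {a, b}) : s = 0 ∧ (c = a ∧ d = b ∨ c = b ∧ d = a) := by
  have hs : s = 0 := Multiset.card_eq_zero.1 (by simpa using congrArg Multiset.card h)
  subst hs
  rcases Multiset.cons_eq_cons.1 h with ⟨rfl, hdb⟩ | ⟨-, t, hd, hb⟩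
  · exact ⟨rfl, .inl ⟨rfl, by simpa using hdb⟩⟩
  · obtain ⟨rfl, rfl⟩ := (Multiset.singleton_eq_cons_iff _).1 hd
    exact ⟨rfl, .inr ⟨((Multiset.singleton_eq_cons_iff _).1 hb).1.symm, rfl⟩⟩

section Exchange

variable [DecidableEq α]

def exchangePair (b B : Finset α) (w x : α) : Multiset (Finset α) :=
  {insert x (b.erase w), insert w (B.erase x)}

def Matroid.IsExchangeable (M : Matroid α) (b B : Finset α) (w x : α) : Prop :=
  w ∈ b \ B ∧ x ∈ B \ b ∧ M.IsBase ↑(insert w (B.erase x))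

theorem Finset.insert_erase_insert_erase {s : Finset α} {a b : α} (ha : a ∈ s) (hb : b ∉ s) :
    insert a ((insert b (s.erase a)).erase b) = s := by
  rw [Finset.erase_insert fun h ↦ hb (Finset.mem_of_mem_erase h), Finset.insert_erase ha]

theorem SymExchStep.symm {N : Matroid α} {S T : Multiset (Finset α)} (h : SymExchStep N S T) :
    SymExchStep N T S := by
  obtain ⟨S₀, B₁, B₂, e, f, hS₀, hB₁, hB₂, he, hf, hB₁', hB₂', rfl, rfl⟩ := h
  rw [Finset.mem_sdiff] at he hf
  have hef : e ≠ f := fun h ↦ he.2 (h ▸ hf.1)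
  refine ⟨S₀, _, _, f, e, hS₀, hB₁', hB₂', ?_, ?_, ?_, ?_, rfl, ?_⟩
  · simp [hef.symm]
  · simp [hef, he.1]
  · rwa [Finset.insert_erase_insert_erase he.1 hf.2]
  · rwa [Finset.insert_erase_insert_erase hf.1 he.2]
  · rw [Finset.insert_erase_insert_erase he.1 hf.2, Finset.insert_erase_insert_erase hf.1 he.2]

theorem SymExchStep.exists_eq_exchangePair {N : Matroid α} {b B : Finset α}
    {T : Multiset (Finset α)} (h : SymExchStep N {b, B} T) :
    ∃ w x, N.IsExchangeable b B w x ∧ N.IsBase ↑b ∧ N.IsBase ↑B ∧ T = exchangePair b B w x := by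
  obtain ⟨S₀, B₁, B₂, e, f, -, hB₁, hB₂, he, hf, hB₁', hB₂', hS, rfl⟩ := h
  obtain ⟨rfl, ⟨rfl, rfl⟩ | ⟨rfl, rfl⟩⟩ := Multiset.cons_cons_eq_pair hS.symm
  · exact ⟨e, f, ⟨he, hf, hB₂'⟩, hB₁, hB₂, rfl⟩
  · exact ⟨f, e, ⟨hf, he, hB₁'⟩, hB₂, hB₁, Multiset.pair_comm _ _⟩

theorem symExchStep_insert_erase {N : Matroid α} {A A' : Finset α} {w x x' : α}
    (hw : w ∈ A \ A') (hx : x ∈ A' \ A) (hx' : x' ∈ A' \ A) (hxx' : x ≠ x')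
    (h₁ : N.IsBase ↑(insert x (A.erase w))) (h₂ : N.IsBase ↑(insert w (A'.erase x)))
    (h₁' : N.IsBase ↑(insert x' (A.erase w))) (h₂' : N.IsBase ↑(insert w (A'.erase x'))) :
    SymExchStep N {insert x (A.erase w), insert w (A'.erase x)}
      {insert x' (A.erase w), insert w (A'.erase x')} := by
  rw [Finset.mem_sdiff] at hw hx hx'
  have hA : insert x' ((insert x (A.erase w)).erase x) = insert x' (A.erase w) := by
    rw [Finset.erase_insert fun h ↦ hx.2 (Finset.mem_of_mem_erase h)]
  have hA' : insert x ((insert w (A'.erase x)).erase x') = insert w (A'.erase x') := by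
    ext y
    simp only [Finset.mem_insert, Finset.mem_erase]
    grind
  refine ⟨0, _, _, x, x', by simp, h₁, h₂, ?_, ?_, by rwa [hA], by rwa [hA'], rfl,
    by rw [hA, hA']; rfl⟩
  · have hxw : x ≠ w := fun h ↦ hx.2 (h ▸ hw.1)
    simp [hx.1, hxw]
  · simp [hxx'.symm, hx'.1, hx'.2]

namespace Matroid.IsBaseRemoval

variable {M Mb : Matroid α} {b B : Finset α}

theorem isBase_insert_erase (h : Mb.IsBaseRemoval M b) (hb : M.IsBase (b : Set α))
    (hB : M.IsBase (B : Set α)) {w x : α} (hw : w ∈ b \ B) (hx : x ∈ B \ b) :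
    M.IsBase ↑(insert x (b.erase w)) := by
  simpa using
    h.isBase_insert_sdiff hb hB (w := w) (x := x) (by simpa using hw) (by simpa using hx)

theorem isBase_of_isExchangeable (h : Mb.IsBaseRemoval M b) (hb : M.IsBase (b : Set α))
    (hB : M.IsBase (B : Set α)) (hcard : 1 < (B \ b).card) {w x : α}
    (hwx : M.IsExchangeable b B w x) :
    Mb.IsBase ↑(insert x (b.erase w)) ∧ Mb.IsBase ↑(insert w (B.erase x)) := by
  obtain ⟨hw, hx, hwx⟩ := hwx
  refine ⟨h.isBase_of_ne (h.isBase_insert_erase hb hB hw hx) ?_, h.isBase_of_ne hwx ?_⟩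
  · rw [Ne, Finset.coe_inj]
    rintro hxb
    exact (Finset.mem_sdiff.1 hx).2 (hxb ▸ Finset.mem_insert_self _ _)
  · obtain ⟨y, hy, hyx⟩ := Finset.exists_mem_ne hcard x
    rw [Finset.mem_sdiff] at hy
    rw [Ne, Finset.coe_inj]
    rintro hwb
    exact hy.2 (hwb ▸ Finset.mem_insert_of_mem (Finset.mem_erase.2 ⟨hyx, hy.1⟩))

theorem symExchStep_exchangePair (h : Mb.IsBaseRemoval M b) (hb : M.IsBase (b : Set α))
    (hB : M.IsBase (B : Set α)) (hcard : 1 < (B \ b).card) {p q : α × α}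
    (hpq : GridAdj (M.IsExchangeable b B) p q) (hne : p ≠ q) :
    SymExchStep Mb (exchangePair b B p.1 p.2) (exchangePair b B q.1 q.2) := by
  obtain ⟨w, x⟩ := p
  obtain ⟨w', x'⟩ := q
  obtain ⟨hp, hq, rfl | rfl⟩ := hpq
  all_goals
    have hp' := h.isBase_of_isExchangeable hb hB hcard hp
    have hq' := h.isBase_of_isExchangeable hb hB hcard hq
  · have hxx' : x ≠ x' := by rintro rfl; exact hne rfl
    exact symExchStep_insert_erase hp.1 hp.2.1 hq.2.1 hxx' hp'.1 hp'.2 hq'.1 hq'.2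
  · have hww' : w ≠ w' := by rintro rfl; exact hne rfl
    rw [exchangePair, exchangePair, Multiset.pair_comm, Multiset.pair_comm (insert _ (b.erase w'))]
    exact symExchStep_insert_erase hp.2.1 hp.1 hq.1 hww' hp'.2 hp'.1 hq'.2 hq'.1

theorem reflTransGen_exchangePair (h : Mb.IsBaseRemoval M b) (hb : M.IsBase (b : Set α))
    (hB : M.IsBase (B : Set α)) {f e g k : α} (hfe : M.IsExchangeable b B f e)
    (hgk : M.IsExchangeable b B g k) :
    Relation.ReflTransGen (SymExchStep Mb) (exchangePair b B f e) (exchangePair b B g k) := by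
  classical
  by_cases hpq : f = g ∧ e = k
  · obtain ⟨rfl, rfl⟩ := hpq
    exact .refl
  have hsdiff : (b \ B).card = (B \ b).card := by
    simpa [← Finset.coe_sdiff] using hb.ncard_sdiff_comm hB
  have hcard : 1 < (B \ b).card := by
    obtain hfg | hek := not_and_or.1 hpq
    · exact hsdiff ▸ Finset.one_lt_card.2 ⟨f, hfe.1, g, hgk.1, hfg⟩
    · exact Finset.one_lt_card.2 ⟨e, hfe.2.1, k, hgk.2.1, hek⟩
  by_contra hnot
  obtain ⟨R, C, hfR, heC, hgR, hkC, hRC⟩ := GridAdj.exists_cut_of_not_reflTransGen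
    (p := (f, e)) (q := (g, k)) hfe hgk
    fun hgrid ↦ hnot <| Relation.ReflTransGen.lift' (fun p ↦ exchangePair b B p.1 p.2)
      (fun p q hpq ↦ if hne : p = q then hne ▸ .refl
        else .single (h.symExchStep_exchangePair hb hB hcard hpq hne)) _ _ hgrid
  set R' := (b \ B).filter (· ∈ R)
  set C' := (B \ b).filter (· ∈ C)
  have hR' : R' ⊆ b \ B := Finset.filter_subset _ _
  have hC' : C' ⊆ B \ b := Finset.filter_subset _ _
  have hRC' : C'.card < R'.card := by
    refine hB.card_lt_card_of_forall_not_isBase hC' (fun w hw hwR x hx hwx ↦ ?_)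
      (Finset.mem_filter.2 ⟨hfe.1, hfR⟩) (by simp [C', Finset.mem_sdiff.1 hgk.2.1, hkC])
      (h.isBase_insert_erase hb hB hfe.1 hgk.2.1)
    rw [Finset.mem_filter] at hx
    exact hwR (Finset.mem_filter.2 ⟨hw, (hRC w x ⟨hw, hx.1, hwx⟩).2 hx.2⟩)
  have hCR' : ((B \ b) \ C').card < ((b \ B) \ R').card := by
    refine hB.card_lt_card_of_forall_not_isBase Finset.sdiff_subset (fun w hw hwR x hx hwx ↦ ?_)
      (by simp [R', hgk.1, hgR]) (by simp [C', Finset.mem_sdiff.1 hfe.2.1, heC])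
      (h.isBase_insert_erase hb hB hgk.1 hfe.2.1)
    have hwR' : w ∈ R' := by_contra fun hwR' ↦ hwR (Finset.mem_sdiff.2 ⟨hw, hwR'⟩)
    obtain ⟨hxbB, hxC'⟩ := Finset.mem_sdiff.1 hx
    exact hxC' (Finset.mem_filter.2
      ⟨hxbB, (hRC w x ⟨hw, hxbB, hwx⟩).1 (Finset.mem_filter.1 hwR').2⟩)
  have := Finset.card_sdiff_add_card_eq_card hR'
  have := Finset.card_sdiff_add_card_eq_card hC'
  omega

end Matroid.IsBaseRemoval

end Exchange

theorem stmt3_general [DecidableEq α] (M Mb : Matroid α)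
    (b : Finset α)
    (hMbE : Mb.E = M.E)
    (hMbB : ∀ B : Set α, Mb.IsBase B ↔ M.IsBase B ∧ B ≠ (b : Set α))
    (B₁ B₂ B₁' B₂'' B₂' : Finset α)
    (hstep1 : SymExchStep M {B₁, B₂} {b, B₂'})
    (hstep2 : SymExchStep M {b, B₂'} {B₁', B₂''}) :
    Relation.ReflTransGen (SymExchStep Mb) {B₁, B₂} {B₁', B₂''} := by
  obtain ⟨f, e, hfe, hb, hB, h₁⟩ := hstep1.symm.exists_eq_exchangePair
  obtain ⟨g, k, hgk, -, -, h₂⟩ := hstep2.exists_eq_exchangePair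
  rw [h₁, h₂]
  exact IsBaseRemoval.reflTransGen_exchangePair ⟨hMbE, hMbB⟩ hb hB hfe hgk

/-- Let `Mb` be the matroid whose bases are the bases of `M` other than `b`.
If `{b, B₂'}` is obtained from `{B₁, B₂}` by one symmetric exchange step in `M`,
and `{B₁', B₂''}` is obtained from `{b, B₂'}` by one symmetric exchange step in
`M`, where `B₁, B₂, B₁', B₂''` are bases of `Mb` and `B₂'` is a basis of `M`,
then `{B₁', B₂''}` is obtained from `{B₁, B₂}` by a finite sequence of symmetric
exchange steps in `Mb`. -/
theorem stmt3 [DecidableEq α] (M Mb : Matroid α) (hE : M.E.Finite)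
    (b : Finset α) (hb : M.IsBase (b : Set α))
    (hMbE : Mb.E = M.E)
    (hMbB : ∀ B : Set α, Mb.IsBase B ↔ M.IsBase B ∧ B ≠ (b : Set α))
    (B₁ B₂ B₁' B₂'' B₂' : Finset α)
    (h₁ : Mb.IsBase (B₁ : Set α)) (h₂ : Mb.IsBase (B₂ : Set α))
    (h₁' : Mb.IsBase (B₁' : Set α)) (h₂'' : Mb.IsBase (B₂'' : Set α))
    (h₂' : M.IsBase (B₂' : Set α))
    (hstep1 : SymExchStep M {B₁, B₂} {b, B₂'})
    (hstep2 : SymExchStep M {b, B₂'} {B₁', B₂''}) :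
    Relation.ReflTransGen (SymExchStep Mb) {B₁, B₂} {B₁', B₂''} :=
  stmt3_general M Mb b hMbE hMbB B₁ B₂ B₁' B₂'' B₂' hstep1 hstep2
end

section
/- Let M be a matroid on a finite ground set E and let b be a basis of M such that the collection B(M) \ {b} is the collection of bases of a matroid M_b on E. Let B₁, B₂, B₁', B₂' be bases of M, all different from b, such that {B₁', B₂'} is obtained from {B₁, B₂} by a single symmetric exchange step in M, and assume there exist bases C₁, C₂, C₃ of M, all different from b, with b + B₁ + B₂ = C₁ + C₂ + C₃ as multisets of elements of E. Then the triple multiset {b, B₁', B₂'} can be obtained from {b, B₁, B₂} by a finite sequence of symmetric exchange steps in M in which no step is of type b, i.e., in no step are the two exchanged bases both different from b while the untouched remainder of the triple contains b. -/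
open Matroid

variable {α : Type*}

/-- A symmetric exchange step that is not of type `b`: it is not the case that
both exchanged bases differ from `b` while the untouched remainder contains `b`. -/
def SymExchStepNotTypeB [DecidableEq α] (M : Matroid α) (b : Finset α)
    (S T : Multiset (Finset α)) : Prop :=
  ∃ (S₀ : Multiset (Finset α)) (B₁ B₂ : Finset α) (e f : α),
    (∀ B ∈ S₀, M.IsBase (B : Set α)) ∧
    M.IsBase (B₁ : Set α) ∧ M.IsBase (B₂ : Set α) ∧
    e ∈ B₁ \ B₂ ∧ f ∈ B₂ \ B₁ ∧
    M.IsBase ((insert f (B₁.erase e) : Finset α) : Set α) ∧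
    M.IsBase ((insert e (B₂.erase f) : Finset α) : Set α) ∧
    S = B₁ ::ₘ B₂ ::ₘ S₀ ∧
    T = insert f (B₁.erase e) ::ₘ insert e (B₂.erase f) ::ₘ S₀ ∧
    ¬(B₁ ≠ b ∧ B₂ ≠ b ∧ b ∈ S₀)

/-! Write the step as the exchange of `e ∈ X` with `f ∈ Y`. Each `Cᵢ ≠ b` has an element outside
`b`, so counting elements outside `b` in `b + X + Y = C₁ + C₂ + C₃` shows that `X` or `Y`, say `Y`,
has two elements outside `b`; then every base obtained from `Y` by a single exchange differs
from `b`. The forbidden step (exchanging `X` and `Y` while `b` stands by) is rerouted through `b`: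
exchange `b` with `Y`, the new base with `X`, and, unless exactly one of `e`, `f` lies in `b`, the
result with the modified `Y`, landing back on `b`. The intermediate bases have the form `b - y + x`;
that `M_b` is a matroid makes such a set a base of `M` as soon as some base avoids `y` and some
independent set contains `x`. -/

open Finset

namespace Matroid

variable {M Mb : Matroid α} {B I b : Set α} {e x y : α}

lemma IsBase.exists_mem_sdiff_isBase_insert_sdiff (hB : M.IsBase B) (hI : M.Indep I)
    (heI : e ∈ I) (heB : e ∉ B) : ∃ v ∈ B \ I, M.IsBase (insert e (B \ {v})) := by
  have hecl : e ∈ M.closure B := by rw [hB.closure_eq]; exact hI.subset_ground heI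
  obtain ⟨v, hvC, hvI⟩ := Set.not_subset.mp fun h ↦
    (hB.indep.fundCircuit_isCircuit hecl heB).dep.not_indep (hI.subset h)
  have hve : v ≠ e := fun h ↦ hvI (h ▸ heI)
  refine ⟨v, ⟨(M.fundCircuit_subset_insert e B hvC).resolve_left hve, hvI⟩,
    hB.exchange_isBase_of_indep heB ?_⟩
  rw [Set.insert_sdiff_singleton_comm hve.symm]
  exact (hB.indep.mem_fundCircuit_iff hecl heB).mp hvC

lemma IsBase.isBase_insert_sdiff_of_forall_isBase_iff (hb : M.IsBase b)
    (hMb : ∀ B, Mb.IsBase B ↔ M.IsBase B ∧ B ≠ b) (hB : M.IsBase B) (hy : y ∈ b \ B)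
    (hI : M.Indep I) (hx : x ∈ I \ b) : M.IsBase (insert x (b \ {y})) := by
  obtain ⟨v, ⟨-, hvb⟩, hbv⟩ := hb.exchange hB hy
  obtain rfl | hvx := eq_or_ne v x
  · exact hbv
  obtain ⟨z, ⟨hzb, -⟩, hbz⟩ := hb.exists_mem_sdiff_isBase_insert_sdiff hI hx.1 hx.2
  obtain rfl | hzy := eq_or_ne z y
  · exact hbz
  have hMb_of {B' : Set α} {a : α} (hB' : M.IsBase B') (ha : a ∈ B' \ b) : Mb.IsBase B' :=
    (hMb B').2 ⟨hB', fun h ↦ ha.2 (h ▸ ha.1)⟩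
  -- In `Mb`, exchanging `v` out of `b - y + v` towards `b - z + x` can only bring in `x` or `y`,
  -- and `y` would give back `b`, which is not a base of `Mb`.
  obtain ⟨w, ⟨hwx, hwv⟩, hbw⟩ := (hMb_of hbv ⟨Set.mem_insert v _, hvb⟩).exchange
    (hMb_of hbz ⟨Set.mem_insert x _, hx.2⟩) (e := v) ⟨Set.mem_insert v _, by grind⟩
  rw [Set.insert_sdiff_of_mem _ (Set.mem_singleton v), Set.sdiff_singleton_eq_self (by grind)]
    at hbw
  obtain rfl | rfl : w = x ∨ w = y := by grind
  · exact ((hMb _).1 hbw).1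
  · exact absurd (Set.insert_sdiff_self_of_mem hy.1) ((hMb _).1 hbw).2

lemma IsBase.two_le_card_sdiff_or_two_le_card_sdiff [DecidableEq α] {b X Y C₁ C₂ C₃ : Finset α}
    (hb : M.IsBase (b : Set α)) (hC₁ : M.IsBase (C₁ : Set α)) (hC₂ : M.IsBase (C₂ : Set α))
    (hC₃ : M.IsBase (C₃ : Set α)) (hC₁b : C₁ ≠ b) (hC₂b : C₂ ≠ b) (hC₃b : C₃ ≠ b)
    (hsum : b.val + X.val + Y.val = C₁.val + C₂.val + C₃.val) :
    2 ≤ #(X \ b) ∨ 2 ≤ #(Y \ b) := by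
  have hcount (s : Finset α) : s.val.countP (· ∉ b) = #(s \ b) := by
    rw [sdiff_eq_filter, card_def, filter_val, Multiset.countP_eq_card_filter]
  have hpos {C : Finset α} (hC : M.IsBase (C : Set α)) (hCb : C ≠ b) : 0 < #(C \ b) :=
    card_pos.2 <| sdiff_nonempty.2 fun h ↦ hCb <| coe_inj.1 <| hC.eq_of_subset_isBase hb h
  have := congrArg (Multiset.countP (· ∉ b)) hsum
  simp only [Multiset.countP_add, hcount, sdiff_self, bot_eq_empty, card_empty] at this
  have := hpos hC₁ hC₁b
  have := hpos hC₂ hC₂b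
  have := hpos hC₃ hC₃b
  omega

end Matroid

lemma Finset.insert_erase_ne_of_two_le_card_sdiff [DecidableEq α] {b Y : Finset α}
    (hY : 2 ≤ #(Y \ b)) (x f : α) : insert x (Y.erase f) ≠ b := by
  obtain ⟨g, hg, hgf⟩ := exists_mem_ne hY f
  rintro rfl
  grind

namespace SymExchStepNotTypeB

variable [DecidableEq α] {M Mb : Matroid α} {b X Y B U V B' U' : Finset α} {e f : α}

lemma of_exchange (hB : M.IsBase (B : Set α)) (hU : M.IsBase (U : Set α))
    (hV : M.IsBase (V : Set α)) (he : e ∈ B \ U) (hf : f ∈ U \ B)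
    (hB' : M.IsBase (B' : Set α)) (hU' : M.IsBase (U' : Set α))
    (hB'eq : insert f (B.erase e) = B') (hU'eq : insert e (U.erase f) = U')
    (hbV : B = b ∨ V ≠ b) :
    SymExchStepNotTypeB M b {B, U, V} {B', U', V} := by
  subst hB'eq hU'eq
  refine ⟨{V}, B, U, e, f, by simpa, hB, hU, he, hf, hB', hU', rfl, rfl, ?_⟩
  rintro ⟨hBb, -, hbV'⟩
  exact hbV.elim hBb (· (Multiset.mem_singleton.1 hbV').symm)

lemma of_exchange' (hB : M.IsBase (B : Set α)) (hU : M.IsBase (U : Set α))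
    (hV : M.IsBase (V : Set α)) (he : e ∈ B \ U) (hf : f ∈ U \ B)
    (hB' : M.IsBase (B' : Set α)) (hU' : M.IsBase (U' : Set α))
    (hB'eq : insert f (B.erase e) = B') (hU'eq : insert e (U.erase f) = U')
    (hbV : B = b ∨ V ≠ b) :
    SymExchStepNotTypeB M b {B, V, U} {B', V, U'} := by
  rw [Multiset.pair_comm V U, Multiset.pair_comm V U']
  exact of_exchange hB hU hV he hf hB' hU' hB'eq hU'eq hbV

lemma reflTransGen_of_mem_of_notMem (hb : M.IsBase (b : Set α))
    (hMb : ∀ B : Set α, Mb.IsBase B ↔ M.IsBase B ∧ B ≠ b)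
    (hX : M.IsBase (X : Set α)) (hY : M.IsBase (Y : Set α)) (he : e ∈ X \ Y) (hf : f ∈ Y \ X)
    (hP : M.IsBase ↑(insert f (X.erase e))) (hQ : M.IsBase ↑(insert e (Y.erase f)))
    (hQb : insert e (Y.erase f) ≠ b) (heb : e ∈ b) (hfb : f ∉ b) :
    Relation.ReflTransGen (SymExchStepNotTypeB M b) {b, X, Y}
      {b, insert f (X.erase e), insert e (Y.erase f)} := by
  rw [mem_sdiff] at he hf
  have hb₁ : M.IsBase ↑(insert f (b.erase e)) := by
    push_cast
    exact hb.isBase_insert_sdiff_of_forall_isBase_iff hMb hY ⟨heb, he.2⟩ hY.indep ⟨hf.1, hfb⟩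
  clear hMb
  have step₁ : SymExchStepNotTypeB M b {b, X, Y} {insert f (b.erase e), X, insert e (Y.erase f)} :=
    of_exchange' hb hY hX (by grind) (by grind) hb₁ hQ rfl rfl (.inl rfl)
  have step₂ : SymExchStepNotTypeB M b {insert f (b.erase e), X, insert e (Y.erase f)}
      {b, insert f (X.erase e), insert e (Y.erase f)} :=
    of_exchange (e := f) (f := e) hb₁ hX hQ (by grind) (by grind) hb hP (by grind) rfl (.inr hQb)
  exact .head step₁ (.single step₂)

lemma reflTransGen_of_notMem_of_notMem (hb : M.IsBase (b : Set α))
    (hMb : ∀ B : Set α, Mb.IsBase B ↔ M.IsBase B ∧ B ≠ b)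
    (hX : M.IsBase (X : Set α)) (hY : M.IsBase (Y : Set α)) (he : e ∈ X \ Y) (hf : f ∈ Y \ X)
    (hP : M.IsBase ↑(insert f (X.erase e))) (hQ : M.IsBase ↑(insert e (Y.erase f)))
    (hPb : insert f (X.erase e) ≠ b) (heb : e ∉ b) (hfb : f ∉ b) (hYb : 2 ≤ #(Y \ b)) :
    Relation.ReflTransGen (SymExchStepNotTypeB M b) {b, X, Y}
      {b, insert f (X.erase e), insert e (Y.erase f)} := by
  rw [mem_sdiff] at he hf
  obtain ⟨y, ⟨hyb, hyY⟩, hYy⟩ := hY.exchange hb (e := f) ⟨hf.1, hfb⟩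
  replace hYy : M.IsBase ↑(insert y (Y.erase f)) := by push_cast; exact hYy
  have hb₁ : M.IsBase ↑(insert f (b.erase y)) := by
    push_cast
    exact hb.isBase_insert_sdiff_of_forall_isBase_iff hMb hY ⟨hyb, hyY⟩ hY.indep ⟨hf.1, hfb⟩
  have hb₂ : M.IsBase ↑(insert e (b.erase y)) := by
    push_cast
    exact hb.isBase_insert_sdiff_of_forall_isBase_iff hMb hY ⟨hyb, hyY⟩ hX.indep ⟨he.1, heb⟩
  clear hMb
  have step₁ : SymExchStepNotTypeB M b {b, X, Y}
      {insert f (b.erase y), X, insert y (Y.erase f)} :=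
    of_exchange' hb hY hX (by grind) (by grind) hb₁ hYy rfl rfl (.inl rfl)
  have step₂ : SymExchStepNotTypeB M b {insert f (b.erase y), X, insert y (Y.erase f)}
      {insert e (b.erase y), insert f (X.erase e), insert y (Y.erase f)} :=
    of_exchange (e := f) (f := e) hb₁ hX hYy (by grind) (by grind) hb₂ hP (by grind) rfl
      (.inr (insert_erase_ne_of_two_le_card_sdiff hYb y f))
  have step₃ : SymExchStepNotTypeB M b
      {insert e (b.erase y), insert f (X.erase e), insert y (Y.erase f)}
      {b, insert f (X.erase e), insert e (Y.erase f)} :=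
    of_exchange' (e := e) (f := y) hb₂ hYy hP (by grind) (by grind) hb hQ (by grind) (by grind)
      (.inr hPb)
  exact .head step₁ (.head step₂ (.single step₃))

lemma reflTransGen_of_mem_of_mem (hb : M.IsBase (b : Set α))
    (hMb : ∀ B : Set α, Mb.IsBase B ↔ M.IsBase B ∧ B ≠ b)
    (hX : M.IsBase (X : Set α)) (hY : M.IsBase (Y : Set α)) (he : e ∈ X \ Y) (hf : f ∈ Y \ X)
    (hP : M.IsBase ↑(insert f (X.erase e))) (hQ : M.IsBase ↑(insert e (Y.erase f)))
    (hPb : insert f (X.erase e) ≠ b) (heb : e ∈ b) (hfb : f ∈ b) (hYb : 2 ≤ #(Y \ b)) :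
    Relation.ReflTransGen (SymExchStepNotTypeB M b) {b, X, Y}
      {b, insert f (X.erase e), insert e (Y.erase f)} := by
  rw [mem_sdiff] at he hf
  obtain ⟨v, ⟨hvY, hvb⟩, hYv⟩ := hY.exists_mem_sdiff_isBase_insert_sdiff hb.indep heb he.2
  replace hYv : M.IsBase ↑(insert e (Y.erase v)) := by push_cast; exact hYv
  have hb₁ : M.IsBase ↑(insert v (b.erase e)) := by
    push_cast
    exact hb.isBase_insert_sdiff_of_forall_isBase_iff hMb hY ⟨heb, he.2⟩ hY.indep ⟨hvY, hvb⟩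
  have hb₂ : M.IsBase ↑(insert v (b.erase f)) := by
    push_cast
    exact hb.isBase_insert_sdiff_of_forall_isBase_iff hMb hX ⟨hfb, hf.2⟩ hY.indep ⟨hvY, hvb⟩
  clear hMb
  have step₁ : SymExchStepNotTypeB M b {b, X, Y}
      {insert v (b.erase e), X, insert e (Y.erase v)} :=
    of_exchange' hb hY hX (by grind) (by grind) hb₁ hYv rfl rfl (.inl rfl)
  have step₂ : SymExchStepNotTypeB M b {insert v (b.erase e), X, insert e (Y.erase v)}
      {insert v (b.erase f), insert f (X.erase e), insert e (Y.erase v)} :=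
    of_exchange (e := f) (f := e) hb₁ hX hYv (by grind) (by grind) hb₂ hP (by grind) rfl
      (.inr (insert_erase_ne_of_two_le_card_sdiff hYb e v))
  have step₃ : SymExchStepNotTypeB M b
      {insert v (b.erase f), insert f (X.erase e), insert e (Y.erase v)}
      {b, insert f (X.erase e), insert e (Y.erase f)} :=
    of_exchange' (e := v) (f := f) hb₂ hYv hP (by grind) (by grind) hb hQ (by grind) (by grind)
      (.inr hPb)
  exact .head step₁ (.head step₂ (.single step₃))

lemma reflTransGen_of_two_le_card_sdiff (hb : M.IsBase (b : Set α))
    (hMb : ∀ B : Set α, Mb.IsBase B ↔ M.IsBase B ∧ B ≠ b)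
    (hX : M.IsBase (X : Set α)) (hY : M.IsBase (Y : Set α)) (he : e ∈ X \ Y) (hf : f ∈ Y \ X)
    (hP : M.IsBase ↑(insert f (X.erase e))) (hQ : M.IsBase ↑(insert e (Y.erase f)))
    (hPb : insert f (X.erase e) ≠ b) (hQb : insert e (Y.erase f) ≠ b) (hYb : 2 ≤ #(Y \ b)) :
    Relation.ReflTransGen (SymExchStepNotTypeB M b) {b, X, Y}
      {b, insert f (X.erase e), insert e (Y.erase f)} := by
  by_cases heb : e ∈ b <;> by_cases hfb : f ∈ b
  · exact reflTransGen_of_mem_of_mem hb hMb hX hY he hf hP hQ hPb heb hfb hYb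
  · exact reflTransGen_of_mem_of_notMem hb hMb hX hY he hf hP hQ hQb heb hfb
  · rw [Multiset.pair_comm X, Multiset.pair_comm (insert f _)]
    exact reflTransGen_of_mem_of_notMem hb hMb hY hX hf he hQ hP hPb hfb heb
  · exact reflTransGen_of_notMem_of_notMem hb hMb hX hY he hf hP hQ hPb heb hfb hYb

lemma reflTransGen_of_two_le_card_sdiff_or (hb : M.IsBase (b : Set α))
    (hMb : ∀ B : Set α, Mb.IsBase B ↔ M.IsBase B ∧ B ≠ b)
    (hX : M.IsBase (X : Set α)) (hY : M.IsBase (Y : Set α)) (he : e ∈ X \ Y) (hf : f ∈ Y \ X)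
    (hP : M.IsBase ↑(insert f (X.erase e))) (hQ : M.IsBase ↑(insert e (Y.erase f)))
    (hPb : insert f (X.erase e) ≠ b) (hQb : insert e (Y.erase f) ≠ b)
    (hXY : 2 ≤ #(X \ b) ∨ 2 ≤ #(Y \ b)) :
    Relation.ReflTransGen (SymExchStepNotTypeB M b) {b, X, Y}
      {b, insert f (X.erase e), insert e (Y.erase f)} := by
  obtain hXb | hYb := hXY
  · rw [Multiset.pair_comm X, Multiset.pair_comm (insert f _)]
    exact reflTransGen_of_two_le_card_sdiff hb hMb hY hX hf he hQ hP hQb hPb hXb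
  · exact reflTransGen_of_two_le_card_sdiff hb hMb hX hY he hf hP hQ hPb hQb hYb

end SymExchStepNotTypeB

open SymExchStepNotTypeB in
theorem stmt6_general [DecidableEq α] (M Mb : Matroid α)
    (b : Finset α) (hb : M.IsBase (b : Set α))
    (hMbB : ∀ B : Set α, Mb.IsBase B ↔ M.IsBase B ∧ B ≠ (b : Set α))
    (B₁ B₂ B₁' B₂' : Finset α)
    (hne₁' : B₁' ≠ b) (hne₂' : B₂' ≠ b)
    (hstep : SymExchStep M {B₁, B₂} {B₁', B₂'})
    (hC : ∃ C₁ C₂ C₃ : Finset α,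
      M.IsBase (C₁ : Set α) ∧ M.IsBase (C₂ : Set α) ∧ M.IsBase (C₃ : Set α) ∧
      C₁ ≠ b ∧ C₂ ≠ b ∧ C₃ ≠ b ∧
      b.val + B₁.val + B₂.val = C₁.val + C₂.val + C₃.val) :
    Relation.ReflTransGen (SymExchStepNotTypeB M b) {b, B₁, B₂} {b, B₁', B₂'} := by
  obtain ⟨S₀, X, Y, e, f, -, hX, hY, he, hf, hP, hQ, hS, hT⟩ := hstep
  obtain rfl : S₀ = 0 := by simpa using congrArg Multiset.card hS
  obtain ⟨C₁, C₂, C₃, hC₁, hC₂, hC₃, hC₁b, hC₂b, hC₃b, hsum⟩ := hC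
  have hXY : B₁.val + B₂.val = X.val + Y.val := by
    simpa using congrArg (fun S : Multiset (Finset α) ↦ (S.map Finset.val).sum) hS
  have hne : ∀ B ∈ ({B₁', B₂'} : Multiset (Finset α)), B ≠ b := by simp [hne₁', hne₂']
  rw [hT] at hne
  rw [show ({b, B₁, B₂} : Multiset (Finset α)) = {b, X, Y} from congrArg (b ::ₘ ·) hS,
    show ({b, B₁', B₂'} : Multiset (Finset α)) = {b, _, _} from congrArg (b ::ₘ ·) hT]
  refine reflTransGen_of_two_le_card_sdiff_or hb hMbB hX hY he hf hP hQ (hne _ (by simp))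
    (hne _ (by simp)) (hb.two_le_card_sdiff_or_two_le_card_sdiff hC₁ hC₂ hC₃ hC₁b hC₂b hC₃b ?_)
  rw [add_assoc, ← hXY, ← add_assoc, hsum]

/-- Suppose the bases of `Mb` are exactly the bases of `M` other than `b`. Let
`B₁, B₂, B₁', B₂'` be bases of `M` distinct from `b` with `{B₁', B₂'}` obtained
from `{B₁, B₂}` by one symmetric exchange step in `M`, and suppose
`b + B₁ + B₂ = C₁ + C₂ + C₃` as element multisets for some bases `C₁, C₂, C₃` of
`M` distinct from `b`. Then `{b, B₁', B₂'}` is obtained from `{b, B₁, B₂}` by a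
finite sequence of symmetric exchange steps in `M`, none of which is of type `b`. -/
theorem stmt6 [DecidableEq α] (M Mb : Matroid α) (hE : M.E.Finite)
    (b : Finset α) (hb : M.IsBase (b : Set α))
    (hMbE : Mb.E = M.E)
    (hMbB : ∀ B : Set α, Mb.IsBase B ↔ M.IsBase B ∧ B ≠ (b : Set α))
    (B₁ B₂ B₁' B₂' : Finset α)
    (h₁ : M.IsBase (B₁ : Set α)) (h₂ : M.IsBase (B₂ : Set α))
    (h₁' : M.IsBase (B₁' : Set α)) (h₂' : M.IsBase (B₂' : Set α))
    (hne₁ : B₁ ≠ b) (hne₂ : B₂ ≠ b) (hne₁' : B₁' ≠ b) (hne₂' : B₂' ≠ b)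
    (hstep : SymExchStep M {B₁, B₂} {B₁', B₂'})
    (hC : ∃ C₁ C₂ C₃ : Finset α,
      M.IsBase (C₁ : Set α) ∧ M.IsBase (C₂ : Set α) ∧ M.IsBase (C₃ : Set α) ∧
      C₁ ≠ b ∧ C₂ ≠ b ∧ C₃ ≠ b ∧
      b.val + B₁.val + B₂.val = C₁.val + C₂.val + C₃.val) :
    Relation.ReflTransGen (SymExchStepNotTypeB M b) {b, B₁, B₂} {b, B₁', B₂'} :=
  stmt6_general M Mb b hb hMbB B₁ B₂ B₁' B₂' hne₁' hne₂' hstep hC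
end

section
/- Let M be a matroid of rank r on a finite ground set E and let b be a basis of M. For a basis B of M let v_B ∈ ℝ^E denote its 0/1 indicator vector. Then the convex hull of {v_B : B a basis of M, B ≠ b} equals the intersection of the convex hull of {v_B : B a basis of M} with the half space {x ∈ ℝ^E : ∑_{i∈b} x(i) ≤ r − 1}. -/
/-!
Write a point `x` of the base polytope with `∑ i ∈ b, x i ≤ r - 1` as a convex combination
`∑ w_B v_B` minimising the weight `w_b`, which exists by compactness. If `w_b > 0`, some base
`B` with `|b \ B| ≥ 2` carries weight: otherwise every other base in the support has
`∑ i ∈ b, v_B i = r - 1`, which forces `∑ i ∈ b, x i > r - 1`. Symmetric basis exchange then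
gives bases `B₁, B₂ ≠ b` with `v_b + v_B = v_B₁ + v_B₂`, and moving weight from `b, B` to
`B₁, B₂` lowers `w_b`.
-/

namespace Matroid

variable {α : Type*} {M : Matroid α} {B₁ B₂ : Set α} {e : α}

lemma IsBase.exists_symm_exchange (hB₁ : M.IsBase B₁) (hB₂ : M.IsBase B₂) (he : e ∈ B₁ \ B₂) :
    ∃ f ∈ B₂ \ B₁, M.IsBase (insert f B₁ \ {e}) ∧ M.IsBase (insert e B₂ \ {f}) := by
  have heE : e ∈ M.E := hB₁.subset_ground he.1
  -- A circuit and a cocircuit never meet in exactly one element.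
  obtain ⟨f, ⟨hfC, hfK⟩, hfe⟩ : ∃ f ∈ M.fundCircuit e B₂ ∩ M.fundCocircuit e B₁, f ≠ e :=
    ((hB₂.fundCircuit_isCircuit heE he.2).isCocircuit_inter_nontrivial
      (fundCocircuit_isCocircuit he.1 hB₁)
      ⟨e, mem_fundCircuit .., mem_fundCocircuit ..⟩).exists_ne e
  have hfB₂ : f ∈ B₂ := (M.fundCircuit_subset_insert e B₂ hfC).resolve_left hfe
  have hfB₁ : f ∉ B₁ := ((M.fundCocircuit_subset_insert_compl e B₁ hfK).resolve_left hfe).2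
  rw [hB₂.indep.mem_fundCircuit_iff (by rwa [hB₂.closure_eq]) he.2] at hfC
  rw [hB₁.mem_fundCocircuit_iff_mem_fundCircuit,
    hB₁.indep.mem_fundCircuit_iff (by rw [hB₁.closure_eq]; exact hB₂.subset_ground hfB₂) hfB₁]
    at hfK
  exact ⟨f, ⟨hfB₂, hfB₁⟩, hB₁.exchange_isBase_of_indep' he.1 hfB₁ hfK,
    hB₂.exchange_isBase_of_indep' hfB₂ he.2 hfC⟩

end Matroid

section ConvexHull

variable {ι E : Type*} [Fintype ι] [AddCommGroup E] [Module ℝ E]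

lemma convexHull_range_eq_image_stdSimplex (v : ι → E) :
    convexHull ℝ (Set.range v) = Fintype.linearCombination ℝ v '' stdSimplex ℝ ι := by
  classical
  rw [← convexHull_rangle_single_eq_stdSimplex, LinearMap.image_convexHull,
    ← Set.range_comp]
  congr 2
  ext i
  simp [Fintype.linearCombination_apply_single]

lemma exists_stdSimplex_linearCombination_eq_minimal_apply {v : ι → E} {x : E}
    (hx : x ∈ convexHull ℝ (Set.range v)) (i₀ : ι) :
    ∃ w ∈ stdSimplex ℝ ι, Fintype.linearCombination ℝ v w = x ∧
      ∀ w' ∈ stdSimplex ℝ ι, Fintype.linearCombination ℝ v w' = x → w i₀ ≤ w' i₀ := by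
  rw [convexHull_range_eq_image_stdSimplex] at hx
  obtain ⟨w₀, hw₀, rfl⟩ := hx
  set f := Fintype.linearCombination ℝ v
  have hfiber : {w | f w = f w₀} = (· - w₀) ⁻¹' LinearMap.ker f := by
    ext w
    simp [sub_eq_zero]
  have hK : IsCompact (stdSimplex ℝ ι ∩ {w | f w = f w₀}) := by
    refine (isCompact_stdSimplex ℝ ι).inter_right ?_
    rw [hfiber]
    exact (LinearMap.ker f).closed_of_finiteDimensional.preimage (continuous_sub_right w₀)
  obtain ⟨w, ⟨hw, hfw⟩, hmin⟩ :=
    hK.exists_isMinOn ⟨w₀, hw₀, rfl⟩ (continuous_apply i₀).continuousOn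
  exact ⟨w, hw, hfw, fun w' hw' hfw' => hmin ⟨hw', hfw'⟩⟩

lemma exists_stdSimplex_linearCombination_eq_apply_lt {v : ι → E} {w : ι → ℝ}
    (hw : w ∈ stdSimplex ℝ ι) {i₀ i j k : ι} (hi : i ≠ i₀) (hj : j ≠ i₀) (hk : k ≠ i₀)
    (hv : v i₀ + v i = v j + v k) (h₀ : 0 < w i₀) (hpos : 0 < w i) :
    ∃ w' ∈ stdSimplex ℝ ι, Fintype.linearCombination ℝ v w' = Fintype.linearCombination ℝ v w ∧
      w' i₀ < w i₀ := by
  classical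
  set μ := min (w i₀) (w i)
  have hμ : 0 < μ := lt_min h₀ hpos
  have hμ₀ : μ ≤ w i₀ := min_le_left _ _
  have hμi : μ ≤ w i := min_le_right _ _
  set d : ι → ℝ := Pi.single j 1 + Pi.single k 1 - Pi.single i₀ 1 - Pi.single i 1
  refine ⟨w + μ • d, ⟨fun m => ?_, ?_⟩, ?_, ?_⟩
  · have := hw.1 m
    simp only [d, Pi.add_apply, Pi.smul_apply, Pi.sub_apply, Pi.single_apply, smul_eq_mul]
    split_ifs <;> subst_vars <;> simp_all <;> linarith
  · simp [d, Finset.sum_add_distrib, Finset.sum_sub_distrib, ← Finset.mul_sum, hw.2]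
  · simp [d, Fintype.linearCombination_apply_single, sub_sub, hv]
  · simpa [d, hi, hj, hk] using hμ

lemma lt_map_linearCombination {v : ι → E} {w : ι → ℝ} (hw : w ∈ stdSimplex ℝ ι)
    (ℓ : E →ₗ[ℝ] ℝ) {c : ℝ} {i₀ : ι} (h₀ : 0 < w i₀) (hgt : c < ℓ (v i₀))
    (hge : ∀ i ≠ i₀, 0 < w i → c ≤ ℓ (v i)) :
    c < ℓ (Fintype.linearCombination ℝ v w) := by
  have hsum : ℓ (Fintype.linearCombination ℝ v w) - c = ∑ i, w i * (ℓ (v i) - c) := by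
    simp [Fintype.linearCombination_apply, mul_sub, Finset.sum_sub_distrib, ← Finset.sum_mul, hw.2]
  have hpos : 0 < ∑ i, w i * (ℓ (v i) - c) := by
    refine Finset.sum_pos' (fun i _ => ?_) ⟨i₀, Finset.mem_univ _, mul_pos h₀ (sub_pos.2 hgt)⟩
    obtain rfl | hi := eq_or_ne i i₀
    · exact (mul_pos h₀ (sub_pos.2 hgt)).le
    obtain hwi | hwi := (hw.1 i).eq_or_lt
    · simp [← hwi]
    · exact mul_nonneg hwi.le (sub_nonneg.2 (hge i hi hwi))
  linarith

lemma linearCombination_mem_convexHull_image_ne {v : ι → E} {w : ι → ℝ}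
    (hw : w ∈ stdSimplex ℝ ι) {i₀ : ι} (h₀ : w i₀ = 0) :
    Fintype.linearCombination ℝ v w ∈ convexHull ℝ (v '' {i | i ≠ i₀}) := by
  classical
  have hsum : ∑ i ∈ Finset.univ.erase i₀, w i = 1 := by
    rw [Finset.sum_erase _ h₀, hw.2]
  have hcomb : Fintype.linearCombination ℝ v w = (Finset.univ.erase i₀).centerMass w v := by
    rw [Finset.centerMass_eq_of_sum_1 _ _ hsum, Finset.sum_erase _ (by simp [h₀]),
      Fintype.linearCombination_apply]
  rw [hcomb]
  exact Finset.centerMass_mem_convexHull _ (fun i _ => hw.1 i) (by simp [hsum])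
    fun i hi => Set.mem_image_of_mem v (Finset.ne_of_mem_erase hi)

theorem convexHull_image_ne_eq_inter_halfSpace (v : ι → E) (ℓ : E →ₗ[ℝ] ℝ) {c : ℝ} {i₀ : ι}
    (hgt : c < ℓ (v i₀)) (hle : ∀ i ≠ i₀, ℓ (v i) ≤ c)
    (hexch : ∀ i ≠ i₀, ℓ (v i) < c → ∃ j k, j ≠ i₀ ∧ k ≠ i₀ ∧ v i₀ + v i = v j + v k) :
    convexHull ℝ (v '' {i | i ≠ i₀}) = convexHull ℝ (Set.range v) ∩ {x | ℓ x ≤ c} := by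
  refine subset_antisymm (Set.subset_inter (convexHull_mono (Set.image_subset_range _ _))
    (convexHull_min ?_ (convex_halfSpace_le ℓ.isLinear c))) ?_
  · rintro _ ⟨i, hi, rfl⟩
    exact hle i hi
  rintro _ ⟨hx, hxc⟩
  obtain ⟨w, hw, rfl, hmin⟩ := exists_stdSimplex_linearCombination_eq_minimal_apply hx i₀
  refine linearCombination_mem_convexHull_image_ne hw ?_
  by_contra hne
  have h₀ : 0 < w i₀ := (hw.1 i₀).lt_of_ne' hne
  refine (lt_map_linearCombination hw ℓ h₀ hgt fun i hi hwi => ?_).not_ge hxc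
  by_contra hlt
  obtain ⟨j, k, hj, hk, hv⟩ := hexch i hi (not_le.1 hlt)
  obtain ⟨w', hw', hcomb, hlt'⟩ :=
    exists_stdSimplex_linearCombination_eq_apply_lt hw hi hj hk hv h₀ hwi
  exact (hmin w' hw' hcomb).not_gt hlt'

end ConvexHull

section Incidence

variable {α : Type*} [DecidableEq α]

def incidenceVector (s : Finset α) : α → ℝ := fun i => if i ∈ s then 1 else 0

lemma sum_incidenceVector (s t : Finset α) :
    ∑ i ∈ s, incidenceVector t i = s.card - (s \ t).card := by
  have hcard : ((s ∩ t).card : ℝ) + (s \ t).card = s.card := by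
    exact_mod_cast Finset.card_inter_add_card_sdiff s t
  simp [incidenceVector, ← hcard]

variable {M : Matroid α} {b B : Finset α}

lemma Matroid.IsBase.sdiff_nonempty (hb : M.IsBase b) (hB : M.IsBase B) (hne : B ≠ b) :
    (b \ B).Nonempty :=
  Finset.sdiff_nonempty.2 fun h =>
    hne (Finset.coe_inj.1 (hb.eq_of_subset_isBase hB (Finset.coe_subset.2 h))).symm

lemma Matroid.IsBase.exists_incidenceVector_add_eq (hb : M.IsBase b) (hB : M.IsBase B)
    (h : 1 < (b \ B).card) :
    ∃ B₁ B₂ : Finset α, M.IsBase B₁ ∧ M.IsBase B₂ ∧ B₁ ≠ b ∧ B₂ ≠ b ∧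
      incidenceVector b + incidenceVector B = incidenceVector B₁ + incidenceVector B₂ := by
  obtain ⟨e, he, g, hg, hge⟩ := Finset.one_lt_card.1 h
  rw [Finset.mem_sdiff] at he hg
  obtain ⟨f, ⟨hfB, hfb⟩, hB₁, hB₂⟩ := hb.exists_symm_exchange hB (e := e) he
  have hfe : f ≠ e := by rintro rfl; exact he.2 hfB
  refine ⟨(insert f b).erase e, (insert e B).erase f, by simpa using hB₁, by simpa using hB₂,
    fun h => hfb (h ▸ by simp [hfe]), fun h => hg.2 ?_, ?_⟩
  · have : g ∈ (insert e B).erase f := h ▸ hg.1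
    exact Finset.mem_of_mem_insert_of_ne (Finset.mem_of_mem_erase this) hge.symm
  · funext i
    by_cases hie : i = e <;> by_cases hif : i = f <;> simp_all [incidenceVector]

end Incidence

/-- Let `M` be a matroid of rank `r` on a finite ground set (all bases have `r`
elements) and let `b` be a basis. The convex hull of the indicator vectors of
the bases different from `b` equals the intersection of the convex hull of the
indicator vectors of all bases with the half space `∑_{i ∈ b} x i ≤ r - 1`. -/
theorem stmt8 {α : Type*} [Fintype α] [DecidableEq α] (M : Matroid α) (r : ℕ)
    (hr : ∀ B : Finset α, M.IsBase (B : Set α) → B.card = r)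
    (b : Finset α) (hb : M.IsBase (b : Set α)) :
    convexHull ℝ {x : α → ℝ | ∃ B : Finset α, M.IsBase (B : Set α) ∧ B ≠ b ∧
        x = fun i => if i ∈ B then 1 else 0}
      = (convexHull ℝ {x : α → ℝ | ∃ B : Finset α, M.IsBase (B : Set α) ∧
            x = fun i => if i ∈ B then 1 else 0})
        ∩ {x : α → ℝ | ∑ i ∈ b, x i ≤ (r : ℝ) - 1} := by
  let ι := {B : Finset α // M.IsBase (B : Set α)}
  have : Fintype ι := Fintype.ofFinite ι
  let ℓ : (α → ℝ) →ₗ[ℝ] ℝ := ∑ i ∈ b, LinearMap.proj i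
  have hℓx : ∀ x, ℓ x = ∑ i ∈ b, x i := fun x => by simp [ℓ]
  have hℓ : ∀ B : ι, ℓ (incidenceVector B.1) = r - (b \ B.1).card := fun B => by
    rw [hℓx, sum_incidenceVector, hr b hb]
  have key := convexHull_image_ne_eq_inter_halfSpace (fun B : ι => incidenceVector B.1) ℓ
    (c := r - 1) (i₀ := ⟨b, hb⟩) (by rw [hℓ]; simp) (fun B hne => ?_) (fun B hne hlt => ?_)
  · convert key using 3
    · ext x
      simp only [ne_eq, eq_comm, and_left_comm, Set.mem_ofPred_eq, Subtype.ext_iff, Set.mem_image,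
        Subtype.exists, exists_and_left, exists_prop, ι]
      rfl
    · ext x
      simp only [Set.mem_ofPred_eq, Set.mem_range, eq_comm, Subtype.exists, exists_prop, ι]
      rfl
    · simp [hℓx]
  · have : 1 ≤ (b \ B.1).card := (hb.sdiff_nonempty B.2 fun h => hne (Subtype.ext h)).card_pos
    rw [hℓ, sub_le_sub_iff_left]
    exact_mod_cast this
  · rw [hℓ, sub_lt_sub_iff_left] at hlt
    obtain ⟨B₁, B₂, hB₁, hB₂, hne₁, hne₂, hv⟩ :=
      hb.exists_incidenceVector_add_eq B.2 (by exact_mod_cast hlt)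
    exact ⟨⟨B₁, hB₁⟩, ⟨B₂, hB₂⟩, fun h => hne₁ congr($h.1), fun h => hne₂ congr($h.1), hv⟩
end

section
/- Let M be a sparse paving matroid of rank r on a finite ground set E, and let S be any collection of r-element subsets of E none of which is a basis of M. Then the collection of all r-element subsets of E not belonging to S is the collection of bases of a matroid on E. -/
/-! The `r`-sets outside `S` include the bases of `M`; the point is basis exchange. For such
sets `X, Y` and `a ∈ X \ Y`, every candidate `X - a + b`, `b ∈ Y \ X`, has `r` elements, so it
can only fail by lying in `S`. Two failing candidates `X - a + b` and `X - a + b'` would be a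
circuit and a hyperplane of `M`; then `b` is in the closure of the independent set `X - a`, which
lies inside the flat `X - a + b'`, so `b = b'`. Thus at most one candidate fails, and when
`Y \ X = {b}` that candidate is `Y` itself. -/

open Matroid

variable {α : Type*}

/-- A circuit of `M` is a minimal dependent set. -/
def IsCircuit (M : Matroid α) (C : Set α) : Prop :=
  M.Dep C ∧ ∀ D ⊂ C, M.Indep D

/-- A hyperplane of `M` is a maximal proper flat. -/
def IsHyperplane (M : Matroid α) (H : Set α) : Prop :=
  M.IsFlat H ∧ H ≠ M.E ∧ ∀ F, M.IsFlat F → H ⊂ F → F = M.E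

/-- A matroid `M` of rank `r` is sparse paving if every `r`-element subset of the
ground set is either a basis or is both a circuit and a hyperplane. -/
def SparsePaving (M : Matroid α) (r : ℕ) : Prop :=
  ∀ S : Finset α, (S : Set α) ⊆ M.E → S.card = r →
    M.IsBase (S : Set α) ∨ (_root_.IsCircuit M (S : Set α) ∧ _root_.IsHyperplane M (S : Set α))

open Finset

theorem Finset.exists_insert_erase_of_subsingleton [DecidableEq α] {P : Finset α → Prop}
    {X Y : Finset α} (hXY : #X = #Y) (hY : P Y) {a : α} (ha : a ∈ X \ Y)
    (hbad : {b | b ∈ Y \ X ∧ ¬ P (insert b (X.erase a))}.Subsingleton) :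
    ∃ b ∈ Y \ X, P (insert b (X.erase a)) := by
  by_contra! hnone
  obtain ⟨b, hb⟩ : (Y \ X).Nonempty := card_pos.mp (card_sdiff_comm hXY ▸ card_pos.mpr ⟨a, ha⟩)
  have hYX : Y \ X = {b} := eq_singleton_iff_unique_mem.mpr
    ⟨hb, fun b' hb' => hbad ⟨hb', hnone b' hb'⟩ ⟨hb, hnone b hb⟩⟩
  have hXY' : X \ Y = {a} := by
    have hcard : #(X \ Y) ≤ 1 := by rw [card_sdiff_comm hXY, hYX, card_singleton]
    exact eq_singleton_iff_unique_mem.mpr ⟨ha, fun c hc => card_le_one.mp hcard c hc a ha⟩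
  suffices hY' : insert b (X.erase a) = Y from hnone b hb (hY' ▸ hY)
  ext x
  have hxY := congrArg (x ∈ ·) hYX
  have hxX := congrArg (x ∈ ·) hXY'
  simp only [mem_sdiff, mem_singleton, eq_iff_iff] at hxY hxX
  simp only [mem_insert, mem_erase]
  tauto

theorem Matroid.exchangeProperty_coe_finset [DecidableEq α] {Q : Finset α → Prop}
    (hQ : ∀ X Y, Q X → Q Y → ∀ a ∈ X \ Y, ∃ b ∈ Y \ X, Q (insert b (X.erase a))) :
    ExchangeProperty (fun B : Set α => ∃ T : Finset α, (T : Set α) = B ∧ Q T) := by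
  rintro _ _ ⟨X, rfl, hX⟩ ⟨Y, rfl, hY⟩ a ha
  obtain ⟨b, hb, hbQ⟩ := hQ X Y hX hY a (by simpa using ha)
  exact ⟨b, by simpa using hb, _, by simp, hbQ⟩

theorem Matroid.Indep.eq_of_dep_insert_of_isFlat_insert {M : Matroid α} {A : Set α} {x y : α}
    (hA : M.Indep A) (hx : M.Dep (insert x A)) (hy : M.IsFlat (insert y A)) : x = y := by
  obtain ⟨hxA, hxnA⟩ := hA.insert_dep_iff.mp hx
  have hcl : M.closure A ⊆ insert y A :=
    hy.closure ▸ M.closure_subset_closure (Set.subset_insert y A)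
  exact (hcl hxA).resolve_right hxnA

namespace SparsePaving

variable {M : Matroid α} {r : ℕ}

theorem eq_of_not_isBase_insert [DecidableEq α] (hsp : SparsePaving M r) {A : Finset α}
    {b b' : α} (hbA : b ∉ A)
    (hbE : ↑(insert b A) ⊆ M.E) (hbr : #(insert b A) = r) (hb : ¬ M.IsBase ↑(insert b A))
    (hb'E : ↑(insert b' A) ⊆ M.E) (hb'r : #(insert b' A) = r) (hb' : ¬ M.IsBase ↑(insert b' A)) :
    b = b' := by
  obtain ⟨hcirc, -⟩ := (hsp _ hbE hbr).resolve_left hb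
  obtain ⟨-, hhyp⟩ := (hsp _ hb'E hb'r).resolve_left hb'
  rw [coe_insert] at hcirc hhyp
  exact (hcirc.2 _ (Set.ssubset_insert (by simpa))).eq_of_dep_insert_of_isFlat_insert hcirc.1 hhyp.1

theorem exchange_of_forall_not_isBase [DecidableEq α] (hsp : SparsePaving M r)
    {S : Set (Finset α)} (hS : ∀ T ∈ S, ¬ M.IsBase ↑T) (X Y : Finset α)
    (hX : ↑X ⊆ M.E ∧ #X = r ∧ X ∉ S) (hY : ↑Y ⊆ M.E ∧ #Y = r ∧ Y ∉ S) (a : α) (ha : a ∈ X \ Y) :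
    ∃ b ∈ Y \ X, ↑(insert b (X.erase a)) ⊆ M.E ∧ #(insert b (X.erase a)) = r ∧
      insert b (X.erase a) ∉ S := by
  obtain ⟨hXE, hXr, -⟩ := hX
  have haX := (mem_sdiff.mp ha).1
  have hnotMem : ∀ b ∈ Y \ X, b ∉ X.erase a :=
    fun b hb h => (mem_sdiff.mp hb).2 (mem_of_mem_erase h)
  have hground : ∀ b ∈ Y \ X, ↑(insert b (X.erase a)) ⊆ M.E := fun b hb => by
    rw [coe_insert, coe_erase]
    exact Set.insert_subset (hY.1 (mem_sdiff.mp hb).1) (Set.sdiff_subset.trans hXE)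
  have hcard : ∀ b ∈ Y \ X, #(insert b (X.erase a)) = r := fun b hb => by
    rw [card_insert_of_notMem (hnotMem b hb), card_erase_of_mem haX, hXr,
      Nat.sub_add_cancel (hXr ▸ card_pos.mpr ⟨a, haX⟩)]
  refine exists_insert_erase_of_subsingleton (P := fun T => ↑T ⊆ M.E ∧ #T = r ∧ T ∉ S)
    (hXr.trans hY.2.1.symm) hY ha ?_
  rintro b ⟨hb, hbS⟩ b' ⟨hb', hb'S⟩
  simp only [hground b hb, hcard b hb, true_and, not_not] at hbS
  simp only [hground b' hb', hcard b' hb', true_and, not_not] at hb'S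
  exact hsp.eq_of_not_isBase_insert (hnotMem b hb) (hground b hb) (hcard b hb) (hS _ hbS)
    (hground b' hb') (hcard b' hb') (hS _ hb'S)

end SparsePaving

/-- Let `M` be a sparse paving matroid of rank `r` on a finite ground set and
let `S` be any collection of `r`-element subsets of the ground set, none of
which is a basis of `M`. Then the `r`-element subsets of the ground set not
belonging to `S` form the collection of bases of a matroid. -/
theorem stmt12 (M : Matroid α) (hE : M.E.Finite) (r : ℕ)
    (hr : ∀ B, M.IsBase B → B.ncard = r)
    (hsp : SparsePaving M r)
    (S : Set (Finset α))
    (hS : ∀ T ∈ S, (T : Set α) ⊆ M.E ∧ T.card = r ∧ ¬ M.IsBase (T : Set α)) :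
    ∃ N : Matroid α, N.E = M.E ∧
      ∀ B : Set α, N.IsBase B ↔
        ∃ T : Finset α, (T : Set α) = B ∧ (T : Set α) ⊆ M.E ∧ T.card = r ∧ T ∉ S := by
  classical
  obtain ⟨B, hB⟩ := M.exists_isBase
  have hBfin : B.Finite := hE.subset hB.subset_ground
  have hBase : ∃ T : Finset α, (T : Set α) = B ∧ (T : Set α) ⊆ M.E ∧ T.card = r ∧ T ∉ S :=
    ⟨hBfin.toFinset, hBfin.coe_toFinset, by simpa using hB.subset_ground,
      by rw [← hr B hB, Set.ncard_eq_toFinset_card B hBfin],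
      fun hmem => (hS _ hmem).2.2 (by simpa using hB)⟩
  refine ⟨Matroid.ofIsBaseOfFinite hE _ ⟨B, hBase⟩
    (exchangeProperty_coe_finset (hsp.exchange_of_forall_not_isBase fun T hT => (hS T hT).2.2))
    (fun _ ⟨_, hT, hTE, _⟩ => hT ▸ hTE), rfl, fun _ => Iff.rfl⟩
end

section
/- Let M be a matroid on a finite ground set E and let b be a basis of M such that the collection B(M) \ {b} is the collection of bases of a matroid on E. Let x₁, x₂ be two distinct elements of b and let y₁, y₂ be two distinct elements of E \ b. If (b \ {x₁}) ∪ {y₁} and (b \ {x₂}) ∪ {y₂} are bases of M, then (b \ {x₁}) ∪ {y₂} and (b \ {x₂}) ∪ {y₁} are bases of M. -/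
namespace Matroid

/- Exchange `y₁` out of `b - x₁ + y₁` against `b - x₂ + y₂`: the replacement lies in `{y₂, x₁}`,
and `x₁` would give back `b`, which is not a base of `N`. -/
theorem IsBase.insert_sdiff_singleton_of_not_isBase {N : Matroid α} {b : Set α} {x₁ x₂ y₁ y₂ : α}
    (hb : ¬ N.IsBase b) (hx₁ : x₁ ∈ b) (hy₁ : y₁ ∉ b) (hy : y₁ ≠ y₂)
    (h₁ : N.IsBase (insert y₁ (b \ {x₁}))) (h₂ : N.IsBase (insert y₂ (b \ {x₂}))) :
    N.IsBase (insert y₂ (b \ {x₁})) := by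
  have hy₁_mem : y₁ ∈ insert y₁ (b \ {x₁}) \ insert y₂ (b \ {x₂}) := by
    simp [hy, hy₁]
  obtain ⟨f, ⟨hf₂, hf₁⟩, hf⟩ := h₁.exchange h₂ hy₁_mem
  rw [Set.insert_sdiff_self_of_notMem fun h => hy₁ h.1] at hf
  obtain rfl | hfb := hf₂
  · exact hf
  · obtain rfl : f = x₁ := by
      by_contra hne
      exact hf₁ (Set.mem_insert_of_mem _ ⟨hfb.1, hne⟩)
    exact absurd (by rwa [Set.insert_sdiff_self_of_mem hx₁] at hf) hb

end Matroid

theorem stmt15_general (M : Matroid α)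
    (b : Set α)
    (hMb : ∃ N : Matroid α, N.E = M.E ∧ ∀ B : Set α, N.IsBase B ↔ M.IsBase B ∧ B ≠ b)
    (x₁ x₂ : α) (hx₁ : x₁ ∈ b) (hx₂ : x₂ ∈ b)
    (y₁ y₂ : α) (hy₁ : y₁ ∈ M.E \ b) (hy₂ : y₂ ∈ M.E \ b) (hy : y₁ ≠ y₂)
    (h₁ : M.IsBase (insert y₁ (b \ {x₁}))) (h₂ : M.IsBase (insert y₂ (b \ {x₂}))) :
    M.IsBase (insert y₂ (b \ {x₁})) ∧ M.IsBase (insert y₁ (b \ {x₂})) := by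
  obtain ⟨N, -, hN⟩ := hMb
  have hb : ¬ N.IsBase b := fun h => ((hN b).1 h).2 rfl
  have hN_of {x y : α} (hy : y ∉ b) (h : M.IsBase (insert y (b \ {x}))) :
      N.IsBase (insert y (b \ {x})) :=
    (hN _).2 ⟨h, fun h' => hy (h' ▸ Set.mem_insert y _)⟩
  have hN₁ := hN_of hy₁.2 h₁
  have hN₂ := hN_of hy₂.2 h₂
  exact ⟨((hN _).1 (hN₁.insert_sdiff_singleton_of_not_isBase hb hx₁ hy₁.2 hy hN₂)).1,
    ((hN _).1 (hN₂.insert_sdiff_singleton_of_not_isBase hb hx₂ hy₂.2 hy.symm hN₁)).1⟩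

/-- Let `b` be a basis of `M` such that the bases of `M` other than `b` form the
collection of bases of a matroid. If `x₁ ≠ x₂` are in `b`, `y₁ ≠ y₂` are in
`E \ b`, and `(b \ {x₁}) ∪ {y₁}` and `(b \ {x₂}) ∪ {y₂}` are bases of `M`, then
`(b \ {x₁}) ∪ {y₂}` and `(b \ {x₂}) ∪ {y₁}` are bases of `M`. -/
theorem stmt15 (M : Matroid α) (hE : M.E.Finite)
    (b : Set α) (hb : M.IsBase b)
    (hMb : ∃ N : Matroid α, N.E = M.E ∧ ∀ B : Set α, N.IsBase B ↔ M.IsBase B ∧ B ≠ b)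
    (x₁ x₂ : α) (hx₁ : x₁ ∈ b) (hx₂ : x₂ ∈ b) (hx : x₁ ≠ x₂)
    (y₁ y₂ : α) (hy₁ : y₁ ∈ M.E \ b) (hy₂ : y₂ ∈ M.E \ b) (hy : y₁ ≠ y₂)
    (h₁ : M.IsBase (insert y₁ (b \ {x₁}))) (h₂ : M.IsBase (insert y₂ (b \ {x₂}))) :
    M.IsBase (insert y₂ (b \ {x₁})) ∧ M.IsBase (insert y₁ (b \ {x₂})) :=
  stmt15_general M b hMb x₁ x₂ hx₁ hx₂ y₁ y₂ hy₁ hy₂ hy h₁ h₂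
end

section
/- Let M be a matroid on a nonempty finite ground set E having no loops and no coloops, and let b be a basis of M such that the collection B(M) \ {b} is the collection of bases of a matroid on E. Then for every y ∈ E \ b, the set b ∪ {y} is a circuit of M. -/
/-!
Let `N` be the matroid whose bases are those of `M` other than `b`. For `x ∈ b` and `y ∉ b`,
since `x` is not a coloop an exchange makes `b \ {x}` independent in `N`, and since `y` is not a
loop some base `J ≠ b` of `M` lies in `insert y b`. Augmenting `b \ {x}` from `J` inside `N`
gives a base `B ≠ b` of `M` with `b \ {x} ⊆ B ⊆ insert y b`; it must contain `y`, so
`insert y (b \ {x})` is independent. Hence every `insert y b \ {e}` is independent, while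
`insert y b` itself is dependent.
-/

open Matroid Set

namespace Matroid

variable {α : Type*} {M N : Matroid α} {b : Set α} {x y : α}

lemma IsBase.indep_sdiff_singleton_of_isBase_iff (hN : ∀ B, N.IsBase B ↔ M.IsBase B ∧ B ≠ b)
    (hb : M.IsBase b) (hxb : x ∈ b) (hx : ∃ B, M.IsBase B ∧ x ∉ B) : N.Indep (b \ {x}) := by
  obtain ⟨B₀, hB₀, hxB₀⟩ := hx
  obtain ⟨w, ⟨-, hwb⟩, hw⟩ := hb.exchange_mem hB₀ hxb hxB₀
  have hwN : N.IsBase (insert w (b \ {x})) :=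
    (hN _).2 ⟨hw, fun h ↦ hwb (h ▸ mem_insert w _)⟩
  exact hwN.indep.subset (subset_insert w _)

lemma IsBase.exists_isBase_mem_subset_insert (hb : M.IsBase b) (hy : ∃ B, M.IsBase B ∧ y ∈ B) :
    ∃ J, M.IsBase J ∧ y ∈ J ∧ J ⊆ insert y b := by
  obtain ⟨B, hB, hyB⟩ := hy
  obtain ⟨J, hJ, hyJ, hJb⟩ :=
    (hB.indep.subset (singleton_subset_iff.2 hyB)).exists_isBase_subset_union_isBase hb
  exact ⟨J, hJ, singleton_subset_iff.1 hyJ, by rwa [singleton_union] at hJb⟩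

lemma IsBase.indep_insert_sdiff_singleton_of_isBase_iff
    (hN : ∀ B, N.IsBase B ↔ M.IsBase B ∧ B ≠ b) (hb : M.IsBase b)
    (hxb : x ∈ b) (hx : ∃ B, M.IsBase B ∧ x ∉ B) (hyb : y ∉ b) (hy : ∃ B, M.IsBase B ∧ y ∈ B) :
    M.Indep (insert y (b \ {x})) := by
  obtain ⟨J, hJ, hyJ, hJb⟩ := hb.exists_isBase_mem_subset_insert hy
  have hJN : N.IsBase J := (hN J).2 ⟨hJ, fun h ↦ hyb (h ▸ hyJ)⟩
  obtain ⟨B, hBN, hxB, hBJ⟩ :=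
    (hb.indep_sdiff_singleton_of_isBase_iff hN hxb hx).exists_isBase_subset_union_isBase hJN
  obtain ⟨hB, hBb⟩ := (hN B).1 hBN
  have hByb : B ⊆ insert y b :=
    hBJ.trans (union_subset (sdiff_subset.trans (subset_insert y b)) hJb)
  have hyB : y ∈ B := by
    by_contra hyB
    refine hBb (hB.eq_of_subset_isBase hb fun e he ↦ (hByb he).resolve_left ?_)
    rintro rfl
    exact hyB he
  exact hB.indep.subset (insert_subset hyB hxB)

lemma IsBase.isCircuit_insert_of_isBase_iff (hN : ∀ B, N.IsBase B ↔ M.IsBase B ∧ B ≠ b)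
    (hb : M.IsBase b) (hcoloop : ∀ x ∈ b, ∃ B, M.IsBase B ∧ x ∉ B)
    (hyb : y ∉ b) (hy : ∃ B, M.IsBase B ∧ y ∈ B) : M.IsCircuit (insert y b) := by
  obtain ⟨B, hB, hyB⟩ := hy
  rw [isCircuit_iff_dep_forall_sdiff_singleton_indep]
  refine ⟨hb.insert_dep ⟨hB.subset_ground hyB, hyb⟩, ?_⟩
  rintro e (rfl | heb)
  · rw [insert_sdiff_self_of_notMem hyb]
    exact hb.indep
  · rw [← insert_sdiff_singleton_comm (ne_of_mem_of_not_mem heb hyb).symm]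
    exact hb.indep_insert_sdiff_singleton_of_isBase_iff hN heb (hcoloop e heb) hyb ⟨B, hB, hyB⟩

end Matroid

theorem stmt16_general (M : Matroid α)
    (hloop : ∀ e ∈ M.E, ∃ B, M.IsBase B ∧ e ∈ B)
    (hcoloop : ∀ e ∈ M.E, ∃ B, M.IsBase B ∧ e ∉ B)
    (b : Set α) (hb : M.IsBase b)
    (hMb : ∃ N : Matroid α, N.E = M.E ∧ ∀ B : Set α, N.IsBase B ↔ M.IsBase B ∧ B ≠ b) :
    ∀ y ∈ M.E \ b,
      (¬ ∃ B, M.IsBase B ∧ insert y b ⊆ B) ∧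
      (∀ D ⊂ insert y b, ∃ B, M.IsBase B ∧ D ⊆ B) := by
  obtain ⟨N, -, hN⟩ := hMb
  rintro y ⟨hyE, hyb⟩
  have hC : M.IsCircuit (insert y b) :=
    hb.isCircuit_insert_of_isBase_iff hN (fun x hx ↦ hcoloop x (hb.subset_ground hx)) hyb
      (hloop y hyE)
  exact ⟨fun ⟨B, hB, hyB⟩ ↦ hC.dep.not_indep (hB.indep.subset hyB),
    fun D hD ↦ (hC.ssubset_indep hD).exists_isBase_superset⟩

/-- Let `M` be a matroid on a nonempty finite ground set without loops (every
element lies in some basis) and without coloops (every element is outside some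
basis), and let `b` be a basis of `M` such that the bases of `M` other than `b`
form the collection of bases of a matroid. Then for every `y ∈ E \ b`, the set
`b ∪ {y}` is a circuit of `M`: it is contained in no basis, but every proper
subset of it is contained in some basis. -/
theorem stmt16 (M : Matroid α) (hE : M.E.Finite) (hEne : M.E.Nonempty)
    (hloop : ∀ e ∈ M.E, ∃ B, M.IsBase B ∧ e ∈ B)
    (hcoloop : ∀ e ∈ M.E, ∃ B, M.IsBase B ∧ e ∉ B)
    (b : Set α) (hb : M.IsBase b)
    (hMb : ∃ N : Matroid α, N.E = M.E ∧ ∀ B : Set α, N.IsBase B ↔ M.IsBase B ∧ B ≠ b) :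
    ∀ y ∈ M.E \ b,
      (¬ ∃ B, M.IsBase B ∧ insert y b ⊆ B) ∧
      (∀ D ⊂ insert y b, ∃ B, M.IsBase B ∧ D ⊆ B) :=
  stmt16_general M hloop hcoloop b hb hMb
end
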